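/- arXiv:2202.09902 — 2 statements merged into one kernel-verified Lean document; each statement's English description precedes it below -/
import Mathlib

section
/- Let λ be a regular uncountable cardinal such that every λ-complete uniform filter on λ fails to be weakly λ-saturated. Then U₁(λ⁺,2,λ,λ) implies Pr₁(λ⁺,λ⁺,λ,λ). -/
open Cardinal Set

/-- A set (of a `Type 1`, such as sets of ordinals or families of such sets)
has cardinality exactly the (small) cardinal `κ`. -/
def cardEq {X : Type 1} (s : Set X) (κ : Cardinal.{0}) : Prop :=
  #s = Cardinal.lift.{1} κ

/-- A set has cardinality at most `κ`. -/
def cardLE {X : Type 1} (s : Set X) (κ : Cardinal.{0}) : Prop :=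
  #s ≤ Cardinal.lift.{1} κ

/-- A set has cardinality less than `κ`. -/
def cardLT {X : Type 1} (s : Set X) (κ : Cardinal.{0}) : Prop :=
  #s < Cardinal.lift.{1} κ



/-- The set of ordinals `a` has order type (exactly) the ordinal `σ`. -/
def otpEq (a : Set Ordinal) (σ : Ordinal.{0}) : Prop :=
  Ordinal.type ((· < ·) : a → a → Prop) = Ordinal.lift.{1} σ

/-- `a < b` elementwise: every element of `a` is below every element of `b`. -/
def setBelow (a b : Set Ordinal) : Prop := ∀ x ∈ a, ∀ y ∈ b, x < y

/-- `c[a × b] = {τ}`: the coloring `c` is constantly `τ` on `a × b`. -/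
def constOn (c : Ordinal → Ordinal → Ordinal) (a b : Set Ordinal) (τ : Ordinal) : Prop :=
  Set.image2 c a b = {τ}

/-- `𝒜` is a `κ`-sized pairwise disjoint subfamily of `[κ]^σ`. -/
def KappaFam (κ : Cardinal.{0}) (σ : Ordinal) (𝒜 : Set (Set Ordinal)) : Prop :=
  (∀ a ∈ 𝒜, a ⊆ Set.Iio κ.ord ∧ otpEq a σ) ∧ 𝒜.PairwiseDisjoint id ∧ cardEq 𝒜 κ

/-- `c` witnesses `Pr₁(κ, κ, θ, χ)`. -/
def IsPr1 (κ θ χ : Cardinal.{0}) (c : Ordinal → Ordinal → Ordinal) : Prop :=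
  ∀ σ < χ.ord, ∀ 𝒜 : Set (Set Ordinal), KappaFam κ σ 𝒜 →
    ∀ ξ < θ.ord, ∃ a ∈ 𝒜, ∃ b ∈ 𝒜, setBelow a b ∧ constOn c a b ξ

/-- `Pr₁(κ, κ, θ, χ)`. -/
def Pr1 (κ θ χ : Cardinal.{0}) : Prop :=
  ∃ c : Ordinal → Ordinal → Ordinal,
    (∀ α β : Ordinal, α < β → β < κ.ord → c α β < θ.ord) ∧ IsPr1 κ θ χ c

/-- `c` witnesses `U₁(κ, 2, θ, χ)`. -/
def IsU1 (κ θ χ : Cardinal.{0}) (c : Ordinal → Ordinal → Ordinal) : Prop :=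
  ∀ σ < χ.ord, ∀ 𝒜 : Set (Set Ordinal), KappaFam κ σ 𝒜 →
    ∀ ε < θ.ord, ∃ a ∈ 𝒜, ∃ b ∈ 𝒜, setBelow a b ∧
      ∃ τ, ε < τ ∧ τ < θ.ord ∧ constOn c a b τ

/-- `U₁(κ, 2, θ, χ)`. -/
def U1 (κ θ χ : Cardinal.{0}) : Prop :=
  ∃ c : Ordinal → Ordinal → Ordinal,
    (∀ α β : Ordinal, α < β → β < κ.ord → c α β < θ.ord) ∧ IsU1 κ θ χ c

/-- `c` witnesses `U(κ, μ, θ, χ)`. -/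
def IsU (κ μ θ χ : Cardinal.{0}) (c : Ordinal → Ordinal → Ordinal) : Prop :=
  ∀ σ < χ.ord, ∀ 𝒜 : Set (Set Ordinal), KappaFam κ σ 𝒜 →
    ∀ τ < θ.ord, ∃ ℬ ⊆ 𝒜, cardEq ℬ μ ∧
      ∀ a ∈ ℬ, ∀ b ∈ ℬ, setBelow a b → ∀ z ∈ Set.image2 c a b, τ ≤ z

/-- `𝒜 ∈ 𝔸^κ_χ`: a pairwise disjoint family of `κ` many (nonempty) subsets of `κ`,
with the supremum of the cardinalities of its members below `χ`. -/
def AFam (κ χ : Cardinal.{0}) (𝒜 : Set (Set Ordinal)) : Prop :=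
  (∀ a ∈ 𝒜, a ⊆ Set.Iio κ.ord ∧ a.Nonempty) ∧ 𝒜.PairwiseDisjoint id ∧ cardEq 𝒜 κ ∧
    ∃ ν < χ, ∀ a ∈ 𝒜, cardLE a ν

/-- `T_c(𝒜)`: the set of `τ < θ` so that `c[a × b] = {τ}` for some `a < b` from `𝒜`. -/
def Tc (θ : Cardinal.{0}) (c : Ordinal → Ordinal → Ordinal) (𝒜 : Set (Set Ordinal)) :
    Set Ordinal :=
  {τ | τ < θ.ord ∧ ∃ a ∈ 𝒜, ∃ b ∈ 𝒜, setBelow a b ∧ constOn c a b τ}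

/-- The collection `F_{c,χ}` of subsets of `θ` containing some `T_c(𝒜)`, `𝒜 ∈ 𝔸^κ_χ`. -/
def Fc (κ θ χ : Cardinal.{0}) (c : Ordinal → Ordinal → Ordinal) : Set (Set Ordinal) :=
  {T | T ⊆ Set.Iio θ.ord ∧ ∃ 𝒜 : Set (Set Ordinal), AFam κ χ 𝒜 ∧ Tc θ c 𝒜 ⊆ T}

/-- `F` is a (proper) `χ`-complete filter on `θ`. -/
def IsNiceFilter (θ χ : Cardinal.{0}) (F : Set (Set Ordinal)) : Prop :=
  (∀ T ∈ F, T ⊆ Set.Iio θ.ord) ∧ Set.Iio θ.ord ∈ F ∧ ∅ ∉ F ∧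
    (∀ S ∈ F, ∀ T, S ⊆ T → T ⊆ Set.Iio θ.ord → T ∈ F) ∧
    (∀ I : Set (Set Ordinal), I ⊆ F → I.Nonempty → cardLT I χ → ⋂₀ I ∈ F)

/-- `F` is a `χ`-complete uniform filter on `θ`. -/
def IsUniformFilter (θ χ : Cardinal.{0}) (F : Set (Set Ordinal)) : Prop :=
  IsNiceFilter θ χ F ∧ ∀ T ∈ F, cardEq T θ

/-- `X` is `F`-positive. -/
def FPos (F : Set (Set Ordinal)) (X : Set Ordinal) : Prop :=
  ∀ T ∈ F, (X ∩ T).Nonempty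

/-!
The colours realised by a `U₁(λ⁺, 2, λ, λ)` colouring `c` on families `𝒜 ∈ 𝔸^{λ⁺}_λ`, the sets
`T_c(𝒜)`, generate a `λ`-complete uniform filter on `λ`: each `T_c(𝒜)` is unbounded in `λ`, since by
pigeonhole `𝒜` has `λ⁺` members of a common order type `σ < λ` and `U₁` applies to them, and fewer
than `λ` families have a common refinement. A map `ψ : λ → λ` whose fibres are all positive for
this filter meets every `T_c(𝒜)` in each fibre, so `ψ ∘ c` witnesses `Pr₁(λ⁺, λ⁺, λ, λ)`.
-/

open Order

universe u

theorem Cardinal.mk_Iio_ord (c : Cardinal.{u}) : #(Iio c.ord) = lift.{u + 1} c := by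
  rw [mk_Iio_ordinal, card_ord]

theorem lift_cof_le_mk_of_forall_exists_lt {o : Ordinal.{u}} {T : Set Ordinal.{u}}
    (hT : ∀ ε < o, ∃ τ ∈ T, τ < o ∧ ε < τ) : lift.{u + 1} o.cof ≤ #T := by
  have hcof : IsCofinal {x : Iio o | x.1 ∈ T} := by
    intro ε
    obtain ⟨τ, hτT, hτo, hετ⟩ := hT ε ε.2
    exact ⟨⟨τ, hτo⟩, hτT, hετ.le⟩
  calc lift.{u + 1} o.cof = Order.cof (Iio o) := by rw [Ordinal.cof_Iio, Ordinal.lift_cof]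
    _ ≤ #{x : Iio o | x.1 ∈ T} := Order.cof_le hcof
    _ ≤ #T := mk_preimage_of_injective _ _ Subtype.val_injective

/-- Take a maximal disjoint subfamily: if it had at most `μ` members, then at most `μ` indices
would meet its union. -/
theorem exists_pairwiseDisjoint_lt_mk {J α : Type u} (a : J → Set α) {μ : Cardinal.{u}}
    (hμ : ℵ₀ ≤ μ) (hJ : μ < #J) (ha : ∀ j, #(a j) ≤ μ) (hfiber : ∀ x, #{j | x ∈ a j} ≤ μ) :
    ∃ M : Set J, M.PairwiseDisjoint a ∧ μ < #M := by
  obtain ⟨M, hM⟩ := zorn_subset {M : Set J | M.PairwiseDisjoint a} fun C hC hchain => by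
    refine ⟨⋃₀ C, ?_, fun _ => subset_sUnion_of_mem⟩
    exact (pairwise_sUnion hchain.directedOn).2 hC
  refine ⟨M, hM.prop, lt_of_not_ge fun hMμ => ?_⟩
  set X := ⋃ j ∈ M, a j
  have hX : #X ≤ μ := by
    refine (mk_biUnion_le a M).trans ?_
    exact (mul_le_mul' hMμ (ciSup_le' fun j : M => ha j)).trans (mul_eq_self hμ).le
  set B := ⋃ x ∈ X, {j | x ∈ a j}
  have hB : #B ≤ μ := by
    refine (mk_biUnion_le _ X).trans ?_
    exact (mul_le_mul' hX (ciSup_le' fun x : X => hfiber x)).trans (mul_eq_self hμ).le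
  obtain ⟨j₀, hj₀⟩ : (M ∪ B)ᶜ.Nonempty := by
    rw [nonempty_compl]
    rintro hMB
    have := (mk_union_le M B).trans (add_le_add hMμ hB)
    rw [hMB, mk_univ, add_eq_self hμ] at this
    exact this.not_gt hJ
  rw [mem_compl_iff, mem_union, not_or] at hj₀
  have hins : insert j₀ M ∈ {M : Set J | M.PairwiseDisjoint a} :=
    hM.prop.insert fun j hj _ => disjoint_left.2 fun x hx₀ hx =>
      hj₀.2 (mem_biUnion (mem_biUnion hj hx) hx₀)
  exact hj₀.1 (hM.2 hins (subset_insert j₀ M) (mem_insert j₀ M))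

theorem otpEq.mk_eq {a : Set Ordinal} {σ : Ordinal} (h : otpEq a σ) : #a = lift.{1} σ.card := by
  rw [← Ordinal.card_type (α := a) (· < ·), h, Ordinal.lift_card]

theorem setBelow.mono {a b a' b' : Set Ordinal} (h : setBelow a b) (ha : a' ⊆ a) (hb : b' ⊆ b) :
    setBelow a' b' :=
  fun x hx y hy => h x (ha hx) y (hb hy)

theorem constOn.mono {c : Ordinal → Ordinal → Ordinal} {a b a' b' : Set Ordinal} {τ : Ordinal}
    (h : constOn c a b τ) (ha : a' ⊆ a) (hb : b' ⊆ b) (ha' : a'.Nonempty) (hb' : b'.Nonempty) :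
    constOn c a' b' τ :=
  (ha'.image2 hb').subset_singleton_iff.1 (h ▸ image2_subset ha hb)

theorem constOn.comp {c : Ordinal → Ordinal → Ordinal} {a b : Set Ordinal} {τ : Ordinal}
    (h : constOn c a b τ) (ψ : Ordinal → Ordinal) : constOn (fun x y => ψ (c x y)) a b (ψ τ) := by
  rw [constOn, ← image_image2, h, image_singleton]

theorem Tc_subset_Tc {θ : Cardinal} {c : Ordinal → Ordinal → Ordinal} {𝒜 ℬ : Set (Set Ordinal)}
    (h : ∀ b ∈ ℬ, ∃ a ∈ 𝒜, a ⊆ b ∧ a.Nonempty) : Tc θ c ℬ ⊆ Tc θ c 𝒜 := by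
  rintro τ ⟨hτ, b, hb, b', hb', hbb', hc⟩
  obtain ⟨a, ha, hab, hane⟩ := h b hb
  obtain ⟨a', ha', hab', hane'⟩ := h b' hb'
  exact ⟨hτ, a, ha, a', ha', hbb'.mono hab hab', hc.mono hab hab' hane hane'⟩

theorem Tc_mem_Fc {κ θ χ : Cardinal} {c : Ordinal → Ordinal → Ordinal} {𝒜 : Set (Set Ordinal)}
    (h𝒜 : AFam κ χ 𝒜) : Tc θ c 𝒜 ∈ Fc κ θ χ c :=
  ⟨fun _ hτ => hτ.1, 𝒜, h𝒜, subset_rfl⟩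

theorem KappaFam.aFam {κ χ : Cardinal} {σ : Ordinal} {𝒜 : Set (Set Ordinal)}
    (h𝒜 : KappaFam κ σ 𝒜) (hκ : 1 < κ) (hσ : σ < χ.ord) : AFam κ χ 𝒜 := by
  obtain ⟨hmem, hdisj, hcard⟩ := h𝒜
  have hσ₀ : σ.card ≠ 0 := by
    intro hσ₀
    have hsub : 𝒜 ⊆ {∅} := fun a ha => by
      rw [mem_singleton_iff, ← mk_set_eq_zero_iff, (hmem a ha).2.mk_eq, hσ₀, lift_zero]
    have := (mk_le_mk_of_subset hsub).trans_eq (mk_singleton _)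
    rw [hcard, lift_le_one_iff] at this
    exact this.not_gt hκ
  refine ⟨fun a ha => ⟨(hmem a ha).1, ?_⟩, hdisj, hcard, σ.card, lt_ord.1 hσ,
    fun a ha => (hmem a ha).2.mk_eq.le⟩
  rw [← nonempty_coe_sort, ← mk_ne_zero_iff, (hmem a ha).2.mk_eq]
  rwa [Ne, lift_eq_zero]

theorem AFam.exists_kappaFam_subset {lam : Cardinal} {𝒜 : Set (Set Ordinal)}
    (h𝒜 : AFam (succ lam) lam 𝒜) (hlam : ℵ₀ ≤ lam) :
    ∃ σ < lam.ord, ∃ ℬ ⊆ 𝒜, KappaFam (succ lam) σ ℬ := by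
  obtain ⟨hmem, hdisj, hcard, ν, hν, hν𝒜⟩ := h𝒜
  have hotp : ∀ a : 𝒜, ∃ σ < lam.ord,
      Ordinal.lift.{1} σ = Ordinal.type ((· < ·) : a.1 → a.1 → Prop) := by
    intro a
    rw [← Ordinal.lt_lift_iff, lift_ord, lt_ord, Ordinal.card_type]
    exact (hν𝒜 a a.2).trans_lt (lift_lt.2 hν)
  choose σ hσ hσa using hotp
  have hsucc : (lift.{1} (succ lam)).IsRegular := (isRegular_succ hlam).lift
  obtain ⟨s, ℬ, hℬ𝒜, hℬ, hσℬ⟩ := infinite_pigeonhole_set (fun a => (⟨σ a, hσ a⟩ : Iio lam.ord))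
    (lift.{1} (succ lam)) hcard.ge hsucc.aleph0_le
    (by rw [hsucc.cof_ord, mk_Iio_ord, lift_lt]; exact lt_succ lam)
  refine ⟨s, s.2, ℬ, hℬ𝒜, fun a ha => ⟨(hmem a (hℬ𝒜 ha)).1, ?_⟩, hdisj.subset hℬ𝒜,
    hℬ.antisymm' (hcard ▸ mk_le_mk_of_subset hℬ𝒜)⟩
  exact (hσa ⟨a, hℬ𝒜 ha⟩).symm.trans (congrArg (Ordinal.lift ∘ Subtype.val) (hσℬ ha))

theorem exists_lt_mem_Tc {lam : Cardinal} {c : Ordinal → Ordinal → Ordinal}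
    (hc : IsU1 (succ lam) lam lam c) (hlam : ℵ₀ ≤ lam) {𝒜 : Set (Set Ordinal)}
    (h𝒜 : AFam (succ lam) lam 𝒜) {ε : Ordinal} (hε : ε < lam.ord) :
    ∃ τ ∈ Tc lam c 𝒜, ε < τ := by
  obtain ⟨σ, hσ, ℬ, hℬ𝒜, hℬ⟩ := h𝒜.exists_kappaFam_subset hlam
  obtain ⟨a, ha, b, hb, hab, τ, hετ, hτ, hc⟩ := hc σ hσ ℬ hℬ ε hε
  exact ⟨τ, ⟨hτ, a, hℬ𝒜 ha, b, hℬ𝒜 hb, hab, hc⟩, hετ⟩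

theorem aFam_image {κ χ : Cardinal} {J : Type 1} (a : J → Set Ordinal) {M : Set J}
    (hM : M.PairwiseDisjoint a) (hMκ : #M = lift.{1} κ) (hsub : ∀ j, a j ⊆ Iio κ.ord)
    (hne : ∀ j, (a j).Nonempty) {ν : Cardinal} (hν : ν < χ) (ha : ∀ j, #(a j) ≤ lift.{1} ν) :
    AFam κ χ (a '' M) := by
  have hinj : InjOn a M := fun j hj j' hj' h =>
    hM.elim_set hj hj' _ (hne j).some_mem (h ▸ (hne j).some_mem)
  refine ⟨?_, hinj.pairwiseDisjoint_image.2 hM, ?_, ν, hν, ?_⟩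
  · rintro _ ⟨j, -, rfl⟩
    exact ⟨hsub j, hne j⟩
  · rw [cardEq, mk_image_eq_of_injOn _ _ hinj, hMκ]
  · rintro _ ⟨j, -, rfl⟩
    exact ha j

/-- Enumerate every family along `λ⁺`, unite the `j`-th members of all families and thin out to a
disjoint subfamily. -/
theorem AFam.exists_Tc_subset {lam θ : Cardinal} (c : Ordinal → Ordinal → Ordinal)
    (hreg : lam.IsRegular) {ι : Type 1} [Nonempty ι] (hι : #ι < lift.{1} lam)
    (𝒜 : ι → Set (Set Ordinal)) (h𝒜 : ∀ i, AFam (succ lam) lam (𝒜 i)) :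
    ∃ ℬ, AFam (succ lam) lam ℬ ∧ ∀ i, Tc θ c ℬ ⊆ Tc θ c (𝒜 i) := by
  have e : ∀ i, Iio (succ lam).ord ≃ 𝒜 i := fun i =>
    Classical.choice (Cardinal.eq.1 ((mk_Iio_ord _).trans (h𝒜 i).2.2.1.symm))
  choose ν hν hν𝒜 using fun i => (h𝒜 i).2.2.2
  obtain ⟨μ, hμ, hμι⟩ := Cardinal.lt_lift_iff.1 hι
  have hbdd : BddAbove (range ν) := ⟨lam, forall_mem_range.2 fun i => (hν i).le⟩
  have hν' : (⨆ i, ν i) < lam :=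
    lift_iSup_lt_of_lt_cof_ord (by rwa [hreg.lift.cof_ord, lift_uzero]) hν
  set a : Iio (succ lam).ord → Set Ordinal := fun j => ⋃ i, (e i j).1
  have ha : ∀ j, #(a j) ≤ lift.{1} (μ * ⨆ i, ν i) := by
    intro j
    refine (mk_iUnion_le _).trans ?_
    rw [lift_mul, hμι]
    exact mul_le_mul' le_rfl (ciSup_le' fun i => (hν𝒜 i _ (e i j).2).trans
      (lift_le.2 (le_ciSup hbdd i)))
  have hfiber : ∀ x, #{j | x ∈ a j} ≤ lift.{1} lam := by
    intro x
    have hfib : {j | x ∈ a j} = ⋃ i, {j | x ∈ (e i j).1} := by ext; simp [a]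
    rw [hfib]
    refine (mk_iUnion_le _).trans ((mul_le_mul' hι.le (ciSup_le' fun i =>
      mk_le_one_iff_set_subsingleton.2 fun j hj j' hj' => ?_)).trans (mul_one _).le)
    exact (e i).injective (Subtype.ext ((h𝒜 i).2.1.elim_set (e i j).2 (e i j').2 x hj hj'))
  obtain ⟨M, hM, hMlam⟩ := exists_pairwiseDisjoint_lt_mk a (aleph0_le_lift.2 hreg.aleph0_le)
    (by rw [mk_Iio_ord, lift_lt]; exact lt_succ lam)
    (fun j => (ha j).trans (lift_le.2 (mul_lt_of_lt hreg.aleph0_le hμ hν').le)) hfiber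
  have hMκ : #M = lift.{1} (succ lam) := by
    refine le_antisymm ((mk_le_mk_of_subset (subset_univ M)).trans_eq ?_) ?_
    · rw [mk_univ, mk_Iio_ord]
    · rw [lift_succ]
      exact succ_le_of_lt hMlam
  have hmem : ∀ i j, (e i j).1 ⊆ Iio (succ lam).ord ∧ (e i j).1.Nonempty :=
    fun i j => (h𝒜 i).1 _ (e i j).2
  refine ⟨a '' M, aFam_image a hM hMκ (fun j => iUnion_subset fun i => (hmem i j).1)
    (fun j => (hmem (Classical.arbitrary ι) j).2.mono (subset_iUnion (fun i => (e i j).1) _))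
    (mul_lt_of_lt hreg.aleph0_le hμ hν') ha, fun i => Tc_subset_Tc ?_⟩
  rintro _ ⟨j, -, rfl⟩
  exact ⟨e i j, (e i j).2, subset_iUnion (fun i => (e i j).1) i, (hmem i j).2⟩

theorem Fc_isUniformFilter {lam : Cardinal} {c : Ordinal → Ordinal → Ordinal}
    (hreg : lam.IsRegular) (hc : IsU1 (succ lam) lam lam c) :
    IsUniformFilter lam lam (Fc (succ lam) lam lam c) := by
  have hlam := hreg.aleph0_le
  refine ⟨⟨fun T hT => hT.1, ?_, ?_, ?_, ?_⟩, ?_⟩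
  · have hsingletons : AFam (succ lam) lam ((fun j : Iio (succ lam).ord => {j.1}) '' univ) :=
      aFam_image _ (fun j _ j' _ h => disjoint_singleton.2 (Subtype.coe_injective.ne h))
        (by rw [mk_univ, mk_Iio_ord]) (fun j => singleton_subset_iff.2 j.2)
        (fun _ => singleton_nonempty _) (one_lt_aleph0.trans_le hlam)
        (fun _ => by rw [mk_singleton, lift_one])
    exact ⟨subset_rfl, _, hsingletons, fun _ hτ => hτ.1⟩
  · rintro ⟨-, 𝒜, h𝒜, hT⟩
    obtain ⟨τ, hτ, -⟩ := exists_lt_mem_Tc hc hlam h𝒜 (ord_pos.2 (aleph0_pos.trans_le hlam))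
    exact hT hτ
  · rintro S ⟨-, 𝒜, h𝒜, hS⟩ T hST hT
    exact ⟨hT, 𝒜, h𝒜, hS.trans hST⟩
  · intro I hIF hI hIlam
    have := hI.to_subtype
    choose 𝒜 h𝒜 hT using fun T : I => (hIF T.2).2
    obtain ⟨ℬ, hℬ, hℬ𝒜⟩ := AFam.exists_Tc_subset c hreg hIlam 𝒜 h𝒜
    exact ⟨(sInter_subset_of_mem hI.some_mem).trans (hIF hI.some_mem).1, ℬ, hℬ,
      subset_sInter fun T hT' => (hℬ𝒜 ⟨T, hT'⟩).trans (hT ⟨T, hT'⟩)⟩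
  · rintro T ⟨hT, 𝒜, h𝒜, hTcT⟩
    refine le_antisymm ((mk_le_mk_of_subset hT).trans_eq (mk_Iio_ord lam)) ?_
    calc lift.{1} lam = lift.{1} lam.ord.cof := by rw [hreg.cof_ord]
      _ ≤ #(Tc lam c 𝒜) := lift_cof_le_mk_of_forall_exists_lt fun ε hε =>
          let ⟨τ, hτ, hετ⟩ := exists_lt_mem_Tc hc hlam h𝒜 hε
          ⟨τ, hτ, hτ.1, hετ⟩
      _ ≤ #T := mk_le_mk_of_subset hTcT

theorem stmt17_general (lam : Cardinal) (hlam : lam.IsRegular)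
    (hnosat : ∀ F : Set (Set Ordinal), IsUniformFilter lam lam F →
      ∃ ψ : Ordinal → Ordinal, (∀ τ < lam.ord, ψ τ < lam.ord) ∧
        ∀ ξ < lam.ord, FPos F {τ | τ < lam.ord ∧ ψ τ = ξ})
    (hU1 : U1 (Order.succ lam) lam lam) :
    Pr1 (Order.succ lam) lam lam := by
  obtain ⟨c, hc_lt, hc⟩ := hU1
  obtain ⟨ψ, hψ_lt, hψ⟩ := hnosat _ (Fc_isUniformFilter hlam hc)
  refine ⟨fun α β => ψ (c α β), fun α β hαβ hβ => hψ_lt _ (hc_lt α β hαβ hβ), ?_⟩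
  intro σ hσ 𝒜 h𝒜 ξ hξ
  have h𝒜' := h𝒜.aFam (one_lt_aleph0.trans_le (hlam.aleph0_le.trans (le_succ lam))) hσ
  obtain ⟨τ, ⟨-, rfl⟩, -, a, ha, b, hb, hab, hτ⟩ := hψ ξ hξ _ (Tc_mem_Fc h𝒜')
  exact ⟨a, ha, b, hb, hab, hτ.comp ψ⟩

/-- For a regular uncountable `λ` such that every `λ`-complete uniform filter on
`λ` fails to be weakly `λ`-saturated, `U₁(λ⁺,2,λ,λ)` implies `Pr₁(λ⁺,λ⁺,λ,λ)`. -/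
theorem stmt17 (lam : Cardinal) (hlam : lam.IsRegular)
    (huncb : Cardinal.aleph 0 < lam)
    (hnosat : ∀ F : Set (Set Ordinal), IsUniformFilter lam lam F →
      ∃ ψ : Ordinal → Ordinal, (∀ τ < lam.ord, ψ τ < lam.ord) ∧
        ∀ ξ < lam.ord, FPos F {τ | τ < lam.ord ∧ ψ τ = ξ})
    (hU1 : U1 (Order.succ lam) lam lam) :
    Pr1 (Order.succ lam) lam lam :=
  stmt17_general lam hlam hnosat hU1
end

section
/- For every ordinal β < κ and every i, the set {α < β : d(α,β) ≤ i} ∪ {β} is closed in the ordinal interval [0, β] (i.e., d is a closed coloring), where d(α,β) := max(im(tr_h(α,β))) is defined from walks along a coherent C-sequence with h(α) := min(C_α) if min(C_α) < μ, else 0. -/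
/-!
If `λ₂(δ,β) < α < δ`, then no ladder `C_{Tr(δ,β)(n)}` met on the walk from `β` to `δ`, except
the last one, has points in `[α, δ)`, so the walk from `β` to `α` follows the walk from `β` to `δ`
for its first `ρ₂(δ,β)` steps. Hence `im tr(δ,β) ⊆ im tr(α,β)` and `d(δ,β) ≤ d(α,β)`. As
`λ₂(δ,β) < δ`, every limit `δ < β` of `{α < β : d(α,β) ≤ i}` has such an `α` below it, so
`d(δ,β) ≤ i`.
-/

open Cardinal Set

/-- The walk `Tr(α,β) : ω → κ` along the `C`-sequence `C`:
`Tr(α,β)(0) = β`; `Tr(α,β)(n+1) = min(C_{Tr(α,β)(n)} \ α)` as long as the previous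
step is above `α`, and `α` from then on. -/
noncomputable def TrW (C : Ordinal → Set Ordinal) (α β : Ordinal) : ℕ → Ordinal
  | 0 => β
  | n + 1 => if α < TrW C α β n then sInf (C (TrW C α β n) ∩ Set.Ici α) else α

/-- `ρ₂(α,β)`: the length of the walk from `β` down to `α`. -/
noncomputable def rho2 (C : Ordinal → Set Ordinal) (α β : Ordinal) : ℕ :=
  sInf {n : ℕ | TrW C α β n = α}

/-- The image of `tr(α,β) = Tr(α,β) ↾ ρ₂(α,β)`. -/
noncomputable def trIm (C : Ordinal → Set Ordinal) (α β : Ordinal) : Set Ordinal :=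
  (fun n => TrW C α β n) '' {n : ℕ | n < rho2 C α β}

/-- `λ(α,β) := max{sup(C_{Tr(α,β)(i)} ∩ α) : i < ρ₂(α,β)}`. -/
noncomputable def lamW (C : Ordinal → Set Ordinal) (α β : Ordinal) : Ordinal :=
  sSup {x | ∃ n < rho2 C α β, x = sSup (C (TrW C α β n) ∩ Set.Iio α)}

/-- `λ₂(α,β) := sup(α ∩ {sup(C_δ ∩ α) : δ ∈ im(tr(α,β))})`. -/
noncomputable def lam2 (C : Ordinal → Set Ordinal) (α β : Ordinal) : Ordinal :=
  sSup (Set.Iio α ∩ {x | ∃ δ ∈ trIm C α β, x = sSup (C δ ∩ Set.Iio α)})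

/-- `acc(s) := {δ ∈ s : sup(s ∩ δ) = δ > 0}`. -/
def accSet (s : Set Ordinal) : Set Ordinal := {δ ∈ s | 0 < δ ∧ sSup (s ∩ Set.Iio δ) = δ}

/-- `C` is a `C`-sequence over `κ`: each `C α` is a closed subset of `α`
with `sup (C α) = sup α`. -/
def IsCSeq (κo : Ordinal) (C : Ordinal → Set Ordinal) : Prop :=
  ∀ α < κo, (∀ x ∈ C α, x < α) ∧ sSup (C α) = sSup (Set.Iio α) ∧
    ∀ δ < α, 0 < δ → sSup (C α ∩ Set.Iio δ) = δ → δ ∈ C α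

/-- The coloring `h : κ → κ` given by `h(α) := min(C_α)` if `min(C_α) < μ`, else `0`. -/
noncomputable def hColor (C : Ordinal → Set Ordinal) (μ : Cardinal) (α : Ordinal) : Ordinal :=
  if sInf (C α) < μ.ord then sInf (C α) else 0

/-- The coloring `d(α,β) := max(im(tr_h(α,β)))`, where `im(tr_h(α,β)) = h '' im(tr(α,β))`. -/
noncomputable def dColor (C : Ordinal → Set Ordinal) (μ : Cardinal) (α β : Ordinal) : Ordinal :=
  sSup (hColor C μ '' trIm C α β)

theorem Ordinal.inter_Ici_eq_of_sSup_inter_Iio_lt {s : Set Ordinal} {α δ : Ordinal}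
    (hαδ : α ≤ δ) (hs : sSup (s ∩ Iio δ) < α) : s ∩ Ici α = s ∩ Ici δ := by
  ext x
  refine ⟨fun ⟨hx, hαx⟩ => ⟨hx, ?_⟩, fun ⟨hx, hδx⟩ => ⟨hx, hαδ.trans hδx⟩⟩
  rw [mem_Ici]
  by_contra! hxδ
  have hxs : x ≤ sSup (s ∩ Iio δ) := le_csSup ⟨δ, fun y hy => hy.2.le⟩ ⟨hx, hxδ⟩
  exact (hs.trans_le hαx).not_ge hxs

theorem TrW_succ_of_lt {C : Ordinal → Set Ordinal} {α β : Ordinal} {n : ℕ}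
    (h : α < TrW C α β n) : TrW C α β (n + 1) = sInf (C (TrW C α β n) ∩ Ici α) :=
  if_pos h

theorem TrW_add_one (C : Ordinal → Set Ordinal) (α β : Ordinal) (n : ℕ) :
    TrW C α β (n + 1) = TrW C α (TrW C α β 1) n := by
  induction n with
  | zero => rfl
  | succ n ih =>
    change (if α < TrW C α β (n + 1) then _ else α) = _
    rw [ih]
    rfl

theorem trIm_finite (C : Ordinal → Set Ordinal) (α β : Ordinal) : (trIm C α β).Finite :=
  (finite_lt_nat _).image _

theorem lam2_set_finite (C : Ordinal → Set Ordinal) (δ β : Ordinal) :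
    (Iio δ ∩ {y | ∃ x ∈ trIm C δ β, y = sSup (C x ∩ Iio δ)}).Finite :=
  ((trIm_finite C δ β).image fun x => sSup (C x ∩ Iio δ)).subset
    fun _ ⟨_, x, hx, hy⟩ => ⟨x, hx, hy.symm⟩

theorem le_lam2 {C : Ordinal → Set Ordinal} {δ β x : Ordinal} (hx : x ∈ trIm C δ β)
    (hlt : sSup (C x ∩ Iio δ) < δ) : sSup (C x ∩ Iio δ) ≤ lam2 C δ β :=
  le_csSup (lam2_set_finite C δ β).bddAbove ⟨hlt, x, hx, rfl⟩

theorem lam2_lt {C : Ordinal → Set Ordinal} {δ β : Ordinal} (hδ : 0 < δ) :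
    lam2 C δ β < δ := by
  rcases (Iio δ ∩ {y | ∃ x ∈ trIm C δ β, y = sSup (C x ∩ Iio δ)}).eq_empty_or_nonempty
    with hs | hs
  · rwa [lam2, hs, csSup_empty]
  · exact ((lam2_set_finite C δ β).csSup_lt_iff hs).mpr fun _ hy => hy.1

section Walk

variable {κo : Ordinal} {C : Ordinal → Set Ordinal} (hC : IsCSeq κo C)
  (hsucc : ∀ α : Ordinal, C (α + 1) = {0, α})
include hC hsucc

theorem IsCSeq.inter_Ici_nonempty {δ e : Ordinal} (he : e < κo) (hδe : δ < e) :
    (C e ∩ Ici δ).Nonempty := by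
  rcases Ordinal.zero_or_succ_or_isSuccLimit e with rfl | ⟨γ, rfl⟩ | hlim
  · exact (not_lt_zero hδe).elim
  · rw [Order.succ_eq_add_one, hsucc]
    exact ⟨γ, Or.inr rfl, Order.lt_succ_iff.mp hδe⟩
  · have hδ1 : δ + 1 ≤ sSup (C e) := by
      rw [(hC e he).2.1]
      exact le_csSup bddAbove_Iio (Order.succ_eq_add_one δ ▸ hlim.succ_lt hδe)
    obtain ⟨x, hx, hδx⟩ := exists_lt_of_lt_csSup' ((Order.lt_add_one_iff.mpr le_rfl).trans_le hδ1)
    exact ⟨x, hx, hδx.le⟩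

theorem TrW_mem_Icc {δ β : Ordinal} (hδβ : δ ≤ β) (hβ : β < κo) (n : ℕ) :
    TrW C δ β n ∈ Icc δ β := by
  induction n with
  | zero => exact ⟨hδβ, le_rfl⟩
  | succ n ih =>
    by_cases h : δ < TrW C δ β n
    · have he : TrW C δ β n < κo := ih.2.trans_lt hβ
      have hmem := csInf_mem (hC.inter_Ici_nonempty hsucc he h)
      rw [TrW_succ_of_lt h]
      exact ⟨hmem.2, ((hC _ he).1 _ hmem.1).le.trans ih.2⟩
    · rw [show TrW C δ β (n + 1) = δ from if_neg h]
      exact ⟨le_rfl, hδβ⟩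

theorem exists_TrW_eq {β : Ordinal} (hβ : β < κo) {δ : Ordinal} (hδβ : δ ≤ β) :
    ∃ n, TrW C δ β n = δ := by
  induction β using WellFoundedLT.induction with
  | _ β ih =>
    rcases hδβ.eq_or_lt with rfl | hlt
    · exact ⟨0, rfl⟩
    have hmem := csInf_mem (hC.inter_Ici_nonempty hsucc hβ hlt)
    have h1 : TrW C δ β 1 = sInf (C β ∩ Ici δ) := if_pos hlt
    have h1β : TrW C δ β 1 < β := h1 ▸ (hC β hβ).1 _ hmem.1
    obtain ⟨n, hn⟩ := ih _ h1β (h1β.trans hβ) (h1 ▸ hmem.2)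
    exact ⟨n + 1, by rw [TrW_add_one, hn]⟩

theorem lt_TrW_of_lt_rho2 {δ β : Ordinal} (hδβ : δ ≤ β) (hβ : β < κo) {n : ℕ}
    (hn : n < rho2 C δ β) : δ < TrW C δ β n :=
  (TrW_mem_Icc hC hsucc hδβ hβ n).1.lt_of_ne' (Nat.notMem_of_lt_sInf hn)

theorem sSup_inter_Iio_lt_of_add_one_lt_rho2 {δ β : Ordinal} (hδβ : δ ≤ β) (hβ : β < κo)
    (hδ : 0 < δ) {n : ℕ} (hn : n + 1 < rho2 C δ β) :
    sSup (C (TrW C δ β n) ∩ Iio δ) < δ := by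
  have hδe : δ < TrW C δ β n := lt_TrW_of_lt_rho2 hC hsucc hδβ hβ (by omega)
  have he : TrW C δ β n < κo := (TrW_mem_Icc hC hsucc hδβ hβ n).2.trans_lt hβ
  refine (csSup_le' fun y hy => hy.2.le).lt_of_ne fun hsup => ?_
  have hδC : δ ∈ C (TrW C δ β n) := (hC _ he).2.2 δ hδe hδ hsup
  have hnext : TrW C δ β (n + 1) ≤ δ := TrW_succ_of_lt hδe ▸ csInf_le' ⟨hδC, self_mem_Ici⟩
  exact (lt_TrW_of_lt_rho2 hC hsucc hδβ hβ hn).not_ge hnext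

theorem TrW_eq_of_lam2_lt {α δ β : Ordinal} (hδβ : δ ≤ β) (hβ : β < κo) (hα : lam2 C δ β < α)
    (hαδ : α < δ) : ∀ n < rho2 C δ β, TrW C α β n = TrW C δ β n := by
  intro n
  induction n with
  | zero => exact fun _ => rfl
  | succ n ih =>
    intro hn
    have hδ : 0 < δ := pos_of_gt hαδ
    have heq := ih (by omega)
    have hδe := lt_TrW_of_lt_rho2 hC hsucc hδβ hβ (n := n) (by omega)
    have hgap := sSup_inter_Iio_lt_of_add_one_lt_rho2 hC hsucc hδβ hβ hδ hn
    have hladder : sSup (C (TrW C δ β n) ∩ Iio δ) < α :=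
      (le_lam2 ⟨n, (by omega : n < rho2 C δ β), rfl⟩ hgap).trans_lt hα
    rw [TrW_succ_of_lt (heq ▸ hαδ.trans hδe), TrW_succ_of_lt hδe, heq,
      Ordinal.inter_Ici_eq_of_sSup_inter_Iio_lt hαδ.le hladder]

theorem trIm_subset_of_lam2_lt {α δ β : Ordinal} (hδβ : δ ≤ β) (hβ : β < κo)
    (hα : lam2 C δ β < α) (hαδ : α < δ) : trIm C δ β ⊆ trIm C α β := by
  have heq := TrW_eq_of_lam2_lt hC hsucc hδβ hβ hα hαδ
  have hρ : rho2 C δ β ≤ rho2 C α β := by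
    refine le_csInf (exists_TrW_eq hC hsucc hβ (hαδ.le.trans hδβ)) fun m hm => ?_
    by_contra! hlt
    have hδm := lt_TrW_of_lt_rho2 hC hsucc hδβ hβ hlt
    rw [← heq m hlt, show TrW C α β m = α from hm] at hδm
    exact hδm.not_gt hαδ
  rintro _ ⟨n, hn, rfl⟩
  exact ⟨n, lt_of_lt_of_le hn hρ, heq n hn⟩

theorem dColor_le_of_lam2_lt (μ : Cardinal) {α δ β : Ordinal} (hδβ : δ ≤ β) (hβ : β < κo)
    (hα : lam2 C δ β < α) (hαδ : α < δ) : dColor C μ δ β ≤ dColor C μ α β :=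
  csSup_le_csSup' ((trIm_finite C α β).image _).bddAbove
    (image_mono (trIm_subset_of_lam2_lt hC hsucc hδβ hβ hα hαδ))

end Walk

theorem stmt19_general (κ μ : Cardinal) (C : Ordinal → Set Ordinal) (hC : IsCSeq κ.ord C)
    (hsucc : ∀ α : Ordinal, C (α + 1) = {0, α})
    (β : Ordinal) (hβ : β < κ.ord) (i : Ordinal) :
    ∀ δ ≤ β, 0 < δ →
      sSup (({α | α < β ∧ dColor C μ α β ≤ i} ∪ {β}) ∩ Set.Iio δ) = δ →
      δ ∈ {α | α < β ∧ dColor C μ α β ≤ i} ∪ {β} := by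
  intro δ hδβ hδ hsup
  rcases hδβ.eq_or_lt with rfl | hδlt
  · exact Or.inr rfl
  obtain ⟨α, ⟨hαS, hαδ⟩, hα⟩ :=
    exists_lt_of_lt_csSup' ((lam2_lt (C := C) (β := β) hδ).trans_eq hsup.symm)
  have hαi : dColor C μ α β ≤ i := by
    rcases hαS with hαS | rfl
    · exact hαS.2
    · exact absurd (hαδ.trans hδlt) (lt_irrefl α)
  exact Or.inl ⟨hδlt, (dColor_le_of_lam2_lt hC hsucc μ hδβ hβ hα hαδ).trans hαi⟩

/-- The coloring `d` is closed: for every `β < κ` and every `i`, the set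
`{α < β : d(α,β) ≤ i} ∪ {β}` is closed in the ordinal interval `[0,β]`. -/
theorem stmt19 (κ μ : Cardinal) (hreg : κ.IsRegular) (huncb : Cardinal.aleph 0 < κ)
    (hμ : μ ≤ κ) (C : Ordinal → Set Ordinal) (hC : IsCSeq κ.ord C)
    (hsucc : ∀ α : Ordinal, C (α + 1) = {0, α})
    (hcoh : ∀ α < κ.ord, ∀ δ ∈ accSet (C α), C δ = C α ∩ Set.Iio δ)
    (β : Ordinal) (hβ : β < κ.ord) (i : Ordinal) :
    ∀ δ ≤ β, 0 < δ →
      sSup (({α | α < β ∧ dColor C μ α β ≤ i} ∪ {β}) ∩ Set.Iio δ) = δ →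
      δ ∈ {α | α < β ∧ dColor C μ α β ≤ i} ∪ {β} :=
  stmt19_general κ μ C hC hsucc β hβ i
end
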